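/- Let L be a graded semiprime G-graded Lie algebra, and let S and S' be G-graded Lie algebras each containing L as a graded subalgebra and each satisfying the following three properties: (1) for every σ ∈ G and every homogeneous s_σ in the degree-σ component there exists a graded essential ideal I of L with [I, s_σ] ⊆ L; (2) for every homogeneous s_σ and every graded essential ideal I of L, [I, s_σ] = 0 implies s_σ = 0; (3) for every graded essential ideal I of L and every graded derivation δ: I → L of degree σ there exists a homogeneous element s_σ of degree σ such that δ(x) = [s_σ, x] for every x ∈ I. Then there exists a graded Lie algebra isomorphism from S onto S' which is the identity on L. -/

import Mathlib

/-
Say that `t` in a Lie algebra containing `L` has an essential denominator if `⁅I, t⁆ ⊆ L` for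
some graded essential ideal `I` of `L`. By (1) for `S` and (3) for `S'`, a homogeneous
`s ∈ S_σ` induces a graded derivation `I → L` of degree `σ`, implemented by some `s' ∈ S'_σ`;
thus `(s, s')` has an essential denominator over the diagonal copy of `L` in `S × S'`.
Property (2) for `S'`, which extends componentwise from homogeneous to arbitrary elements,
makes `s'` unique. Elements with essential denominators form a Lie subalgebra: since `L` is
graded semiprime, `⁅I, I⁆` is again graded essential, and by the Jacobi identity it is a
denominator of `⁅t₁, t₂⁆`. Hence these pairs form the graph of a Lie isomorphism `S ≃ S'`;
it fixes `L`, and uniqueness makes it preserve degrees.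
-/

section

variable {Φ : Type*} [CommRing Φ] {G : Type*} [CommGroup G] [DecidableEq G]
variable {L : Type*} [LieRing L] [LieAlgebra Φ L]

/-- A graded ideal of the `G`-graded Lie algebra `L`. -/
def IsGradedLieIdeal (ℒ : G → Submodule Φ L) [DirectSum.Decomposition ℒ]
    (I : LieIdeal Φ L) : Prop :=
  ∀ y ∈ I, ∀ σ : G, (DirectSum.decompose ℒ y σ : L) ∈ I

/-- A graded essential ideal of the `G`-graded Lie algebra `L`: a graded ideal
meeting every nonzero graded ideal nontrivially. -/
def IsGradedEssentialLieIdeal (ℒ : G → Submodule Φ L) [DirectSum.Decomposition ℒ]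
    (I : LieIdeal Φ L) : Prop :=
  IsGradedLieIdeal ℒ I ∧
    ∀ K : LieIdeal Φ L, IsGradedLieIdeal ℒ K → K ≠ ⊥ → I ⊓ K ≠ ⊥

/-- `δ : I → L` is a derivation. -/
def IsDerivationOn (I : LieIdeal Φ L) (δ : ↥I →ₗ[Φ] L) : Prop :=
  ∀ x y : ↥I,
    δ ⟨⁅(x : L), (y : L)⁆, I.lie_mem y.2⟩ = ⁅δ x, (y : L)⁆ + ⁅(x : L), δ y⁆

/-- `δ : I → L` is graded of degree `σ`: `δ(I_τ) ⊆ L_{τσ}` for every `τ`. -/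
def IsGradedOfDegree (ℒ : G → Submodule Φ L) [DirectSum.Decomposition ℒ]
    (I : LieIdeal Φ L) (δ : ↥I →ₗ[Φ] L) (σ : G) : Prop :=
  ∀ (τ : G) (x : ↥I), (x : L) ∈ ℒ τ → δ x ∈ ℒ (τ * σ)

end

open DirectSum

section GradedLieAlgebra

variable {Φ : Type*} [CommRing Φ] {G : Type*} [DecidableEq G]
variable {L : Type*} [LieRing L] [LieAlgebra Φ L]
variable {T : Type*} [LieRing T] [LieAlgebra Φ T]

def IsLieGrading [Mul G] (𝒯 : G → Submodule Φ T) : Prop :=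
  ∀ (σ τ : G) (x y : T), x ∈ 𝒯 σ → y ∈ 𝒯 τ → ⁅x, y⁆ ∈ 𝒯 (σ * τ)

def IsGradedSemiprime (ℒ : G → Submodule Φ L) [Decomposition ℒ] : Prop :=
  ∀ J : LieIdeal Φ L, IsGradedLieIdeal ℒ J → J ≠ ⊥ → ⁅J, J⁆ ≠ ⊥

theorem decompose_lie_of_mem [Group G] {𝒯 : G → Submodule Φ T} [Decomposition 𝒯]
    (h𝒯 : IsLieGrading 𝒯) {τ : G} {x : T} (hx : x ∈ 𝒯 τ) (u : T) (σ : G) :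
    (decompose 𝒯 ⁅x, u⁆ (τ * σ) : T) = ⁅x, (decompose 𝒯 u σ : T)⁆ := by
  induction u using Decomposition.inductionOn 𝒯 with
  | zero => simp
  | @homogeneous ρ u =>
    by_cases hρ : ρ = σ
    · subst hρ
      rw [decompose_of_mem_same 𝒯 (h𝒯 _ _ _ _ hx u.2), decompose_coe, of_eq_same]
    · rw [decompose_of_mem_ne 𝒯 (h𝒯 _ _ _ _ hx u.2) ((mul_right_injective τ).ne hρ),
        decompose_of_mem_ne 𝒯 u.2 hρ, lie_zero]
  | add u v hu hv =>
    simp only [lie_add, decompose_add, DirectSum.add_apply, Submodule.coe_add, hu, hv]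

theorem decompose_map_of_graded {𝒯 : G → Submodule Φ T} [Decomposition 𝒯]
    (ℒ : G → Submodule Φ L) [Decomposition ℒ] {ι : L →ₗ⁅Φ⁆ T}
    (hιgr : ∀ σ : G, ∀ x ∈ ℒ σ, ι x ∈ 𝒯 σ) (x : L) (σ : G) :
    (decompose 𝒯 (ι x) σ : T) = ι (decompose ℒ x σ) := by
  induction x using Decomposition.inductionOn ℒ with
  | zero => simp
  | @homogeneous ρ x =>
    by_cases hρ : ρ = σ
    · subst hρ
      rw [decompose_of_mem_same 𝒯 (hιgr _ _ x.2), decompose_coe, of_eq_same]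
    · rw [decompose_of_mem_ne 𝒯 (hιgr _ _ x.2) hρ, decompose_of_mem_ne ℒ x.2 hρ, map_zero]
  | add x y hx hy =>
    simp only [map_add, decompose_add, DirectSum.add_apply, Submodule.coe_add, hx, hy]

theorem mem_of_map_mem_of_graded {𝒯 : G → Submodule Φ T} [Decomposition 𝒯]
    {ℒ : G → Submodule Φ L} [Decomposition ℒ] {ι : L →ₗ⁅Φ⁆ T} (hι : Function.Injective ι)
    (hιgr : ∀ σ : G, ∀ x ∈ ℒ σ, ι x ∈ 𝒯 σ) {σ : G} {x : L} (hx : ι x ∈ 𝒯 σ) : x ∈ ℒ σ := by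
  have h : ι (decompose ℒ x σ : L) = ι x := by
    rw [← decompose_map_of_graded ℒ hιgr, decompose_of_mem_same 𝒯 hx]
  exact hι h ▸ SetLike.coe_mem _

end GradedLieAlgebra

section GradedIdeals

variable {Φ : Type*} [CommRing Φ] {G : Type*} [DecidableEq G]
variable {L : Type*} [LieRing L] [LieAlgebra Φ L] {ℒ : G → Submodule Φ L} [Decomposition ℒ]

theorem IsGradedLieIdeal.inf {I J : LieIdeal Φ L} (hI : IsGradedLieIdeal ℒ I)
    (hJ : IsGradedLieIdeal ℒ J) : IsGradedLieIdeal ℒ (I ⊓ J) :=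
  fun y hy σ => ⟨hI y hy.1 σ, hJ y hy.2 σ⟩

theorem IsGradedLieIdeal.lie [Group G] (hℒ : IsLieGrading ℒ) {I J : LieIdeal Φ L}
    (hI : IsGradedLieIdeal ℒ I) (hJ : IsGradedLieIdeal ℒ J) : IsGradedLieIdeal ℒ ⁅I, J⁆ := by
  classical
  intro y hy ρ
  rw [← LieSubmodule.mem_toSubmodule, LieSubmodule.lieIdeal_oper_eq_linear_span'] at hy
  induction hy using Submodule.span_induction with
  | mem _ h =>
    obtain ⟨x, hx, z, hz, rfl⟩ := h
    have hcomp : ∀ τ, (decompose ℒ ⁅(decompose ℒ x τ : L), z⁆ ρ : L) =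
        ⁅(decompose ℒ x τ : L), (decompose ℒ z (τ⁻¹ * ρ) : L)⁆ := fun τ => by
      rw [← decompose_lie_of_mem hℒ (SetLike.coe_mem _), mul_inv_cancel_left]
    rw [← sum_support_decompose ℒ x, sum_lie, decompose_sum, DFinsupp.finsetSum_apply,
      Submodule.coe_sum]
    exact sum_mem fun τ _ => hcomp τ ▸ LieSubmodule.lie_mem_lie (hI x hx τ) (hJ z hz _)
  | zero => simp
  | add _ _ _ _ hx hz =>
    rw [decompose_add, DirectSum.add_apply, Submodule.coe_add]
    exact add_mem hx hz
  | smul c _ _ hx =>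
    rw [decompose_smul, DFinsupp.coe_smul, Pi.smul_apply, Submodule.coe_smul]
    exact Submodule.smul_mem _ c hx

theorem isGradedEssentialLieIdeal_top : IsGradedEssentialLieIdeal ℒ (⊤ : LieIdeal Φ L) :=
  ⟨fun _ _ _ => trivial, fun K _ hK => by rwa [top_inf_eq]⟩

theorem IsGradedEssentialLieIdeal.inf {I J : LieIdeal Φ L} (hI : IsGradedEssentialLieIdeal ℒ I)
    (hJ : IsGradedEssentialLieIdeal ℒ J) : IsGradedEssentialLieIdeal ℒ (I ⊓ J) :=
  ⟨hI.1.inf hJ.1, fun K hK hK0 => by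
    rw [inf_assoc]
    exact hI.2 _ (hJ.1.inf hK) (hJ.2 K hK hK0)⟩

theorem IsGradedEssentialLieIdeal.lie_self [Group G] (hℒ : IsLieGrading ℒ)
    (hL : IsGradedSemiprime ℒ) {I : LieIdeal Φ L} (hI : IsGradedEssentialLieIdeal ℒ I) :
    IsGradedEssentialLieIdeal ℒ ⁅I, I⁆ := by
  refine ⟨hI.1.lie hℒ hI.1, fun K hK hK0 => ne_bot_of_le_ne_bot
    (hL _ (hI.1.inf hK) (hI.2 K hK hK0)) (le_inf ?_ ?_)⟩
  · exact LieSubmodule.mono_lie inf_le_left inf_le_left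
  · exact (LieSubmodule.lie_le_right _ _).trans inf_le_right

end GradedIdeals

section Denominators

variable {Φ : Type*} [CommRing Φ] {G : Type*} [DecidableEq G]
variable {L : Type*} [LieRing L] [LieAlgebra Φ L] (ℒ : G → Submodule Φ L) [Decomposition ℒ]
variable {T : Type*} [LieRing T] [LieAlgebra Φ T]

def HasEssentialDenominator (j : L →ₗ⁅Φ⁆ T) (t : T) : Prop :=
  ∃ I : LieIdeal Φ L, IsGradedEssentialLieIdeal ℒ I ∧ ∀ x ∈ I, ⁅j x, t⁆ ∈ Set.range j

variable {ℒ}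

theorem hasEssentialDenominator_map (j : L →ₗ⁅Φ⁆ T) (a : L) :
    HasEssentialDenominator ℒ j (j a) :=
  ⟨⊤, isGradedEssentialLieIdeal_top, fun x _ => ⟨⁅x, a⁆, j.map_lie x a⟩⟩

theorem exists_mem_lie_map_lie_eq {j : L →ₗ⁅Φ⁆ T} {t : T} {I J : LieIdeal Φ L}
    (h : ∀ x ∈ I, ⁅j x, t⁆ ∈ Set.range j) {u v : L} (huI : u ∈ I) (huJ : u ∈ J) (hvI : v ∈ I)
    (hvJ : v ∈ J) : ∃ w ∈ J, ⁅j ⁅u, v⁆, t⁆ = j w := by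
  obtain ⟨b, hb⟩ := h u huI
  obtain ⟨c, hc⟩ := h v hvI
  refine ⟨⁅u, c⁆ - ⁅v, b⁆, J.sub_mem (lie_mem_left Φ L J _ _ huJ) (lie_mem_left Φ L J _ _ hvJ), ?_⟩
  rw [map_sub, j.map_lie, j.map_lie, j.map_lie, hb, hc, leibniz_lie (j u) (j v) t]
  abel

namespace HasEssentialDenominator

variable {j : L →ₗ⁅Φ⁆ T} {t₁ t₂ : T}

theorem add (h₁ : HasEssentialDenominator ℒ j t₁) (h₂ : HasEssentialDenominator ℒ j t₂) :
    HasEssentialDenominator ℒ j (t₁ + t₂) := by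
  obtain ⟨I₁, hI₁, h₁⟩ := h₁
  obtain ⟨I₂, hI₂, h₂⟩ := h₂
  refine ⟨I₁ ⊓ I₂, hI₁.inf hI₂, fun x hx => ?_⟩
  obtain ⟨a₁, ha₁⟩ := h₁ x hx.1
  obtain ⟨a₂, ha₂⟩ := h₂ x hx.2
  exact ⟨a₁ + a₂, by rw [map_add, ha₁, ha₂, lie_add]⟩

theorem smul (c : Φ) (h : HasEssentialDenominator ℒ j t₁) :
    HasEssentialDenominator ℒ j (c • t₁) := by
  obtain ⟨I, hI, h⟩ := h
  refine ⟨I, hI, fun x hx => ?_⟩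
  obtain ⟨a, ha⟩ := h x hx
  exact ⟨c • a, by rw [map_smul, ha, lie_smul]⟩

theorem sub (h₁ : HasEssentialDenominator ℒ j t₁) (h₂ : HasEssentialDenominator ℒ j t₂) :
    HasEssentialDenominator ℒ j (t₁ - t₂) := by
  simpa only [sub_eq_add_neg, neg_one_smul] using h₁.add (h₂.smul (-1))

theorem lie [Group G] (hℒ : IsLieGrading ℒ) (hL : IsGradedSemiprime ℒ)
    (h₁ : HasEssentialDenominator ℒ j t₁) (h₂ : HasEssentialDenominator ℒ j t₂) :
    HasEssentialDenominator ℒ j ⁅t₁, t₂⁆ := by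
  obtain ⟨I₁, hI₁, h₁⟩ := h₁
  obtain ⟨I₂, hI₂, h₂⟩ := h₂
  refine ⟨⁅I₁ ⊓ I₂, I₁ ⊓ I₂⁆, (hI₁.inf hI₂).lie_self hℒ hL, fun x hx => ?_⟩
  rw [← LieSubmodule.mem_toSubmodule, LieSubmodule.lieIdeal_oper_eq_linear_span'] at hx
  induction hx using Submodule.span_induction with
  | mem _ h =>
    obtain ⟨u, hu, v, hv, rfl⟩ := h
    -- `t₁` carries `⁅u, v⁆` into `I₂`, where `t₂` can act, and symmetrically.
    obtain ⟨w₁, hw₁, e₁⟩ := exists_mem_lie_map_lie_eq h₁ hu.1 hu.2 hv.1 hv.2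
    obtain ⟨w₂, hw₂, e₂⟩ := exists_mem_lie_map_lie_eq h₂ hu.2 hu.1 hv.2 hv.1
    obtain ⟨a₁, ha₁⟩ := h₂ w₁ hw₁
    obtain ⟨a₂, ha₂⟩ := h₁ w₂ hw₂
    refine ⟨a₁ - a₂, ?_⟩
    rw [map_sub, ha₁, ha₂, ← e₁, ← e₂, leibniz_lie (j ⁅u, v⁆) t₁ t₂, ← lie_skew t₁,
      sub_eq_add_neg]
  | zero => exact ⟨0, by simp⟩
  | add _ _ _ _ hx hy =>
    obtain ⟨a, ha⟩ := hx
    obtain ⟨b, hb⟩ := hy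
    exact ⟨a + b, by rw [map_add, ha, hb, map_add, add_lie]⟩
  | smul c _ _ hx =>
    obtain ⟨a, ha⟩ := hx
    exact ⟨c • a, by rw [map_smul, ha, map_smul, smul_lie]⟩

end HasEssentialDenominator

def denominatorSubalgebra [Group G] (hℒ : IsLieGrading ℒ) (hL : IsGradedSemiprime ℒ)
    (j : L →ₗ⁅Φ⁆ T) : LieSubalgebra Φ T where
  carrier := {t | HasEssentialDenominator ℒ j t}
  zero_mem' := by simpa using hasEssentialDenominator_map (ℒ := ℒ) j 0
  add_mem' := HasEssentialDenominator.add
  smul_mem' c _ h := h.smul c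
  lie_mem' := HasEssentialDenominator.lie hℒ hL

end Denominators

section AlgebraOfQuotients

variable {Φ : Type*} [CommRing Φ] {G : Type*} [DecidableEq G]
variable {L : Type*} [LieRing L] [LieAlgebra Φ L] (ℒ : G → Submodule Φ L) [Decomposition ℒ]
variable {S : Type*} [LieRing S] [LieAlgebra Φ S] (𝒮 : G → Submodule Φ S)

def HomogeneousHaveEssentialDenominators (ι : L →ₗ⁅Φ⁆ S) : Prop :=
  ∀ (σ : G) (s : S), s ∈ 𝒮 σ → HasEssentialDenominator ℒ ι s

def EssentialIdealsActFaithfully (ι : L →ₗ⁅Φ⁆ S) : Prop :=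
  ∀ (σ : G) (s : S), s ∈ 𝒮 σ →
    ∀ I : LieIdeal Φ L, IsGradedEssentialLieIdeal ℒ I → (∀ x ∈ I, ⁅ι x, s⁆ = 0) → s = 0

def GradedDerivationsAreInner [CommGroup G] (ι : L →ₗ⁅Φ⁆ S) : Prop :=
  ∀ I : LieIdeal Φ L, IsGradedEssentialLieIdeal ℒ I →
    ∀ (σ : G) (δ : ↥I →ₗ[Φ] L), IsDerivationOn I δ → IsGradedOfDegree ℒ I δ σ →
      ∃ s : S, s ∈ 𝒮 σ ∧ ∀ x : ↥I, ι (δ x) = ⁅s, ι (x : L)⁆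

variable {ℒ 𝒮}
variable {S' : Type*} [LieRing S'] [LieAlgebra Φ S'] {𝒮' : G → Submodule Φ S'}

theorem EssentialIdealsActFaithfully.eq_zero [Group G] [Decomposition 𝒮] (h𝒮 : IsLieGrading 𝒮)
    {ι : L →ₗ⁅Φ⁆ S} (hιgr : ∀ σ : G, ∀ x ∈ ℒ σ, ι x ∈ 𝒮 σ)
    (hS : EssentialIdealsActFaithfully ℒ 𝒮 ι) {I : LieIdeal Φ L}
    (hI : IsGradedEssentialLieIdeal ℒ I) {s : S} (hs : ∀ x ∈ I, ⁅ι x, s⁆ = 0) : s = 0 := by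
  classical
  suffices hσ : ∀ σ, (decompose 𝒮 s σ : S) = 0 by
    rw [← sum_support_decompose 𝒮 s]
    exact Finset.sum_eq_zero fun σ _ => hσ σ
  refine fun σ => hS σ _ (SetLike.coe_mem _) I hI fun x hx => ?_
  rw [← sum_support_decompose ℒ x, map_sum, sum_lie]
  refine Finset.sum_eq_zero fun τ _ => ?_
  -- `⁅ι x_τ, s_σ⁆` is the `τσ`-component of `⁅ι x_τ, s⁆`, and `x_τ ∈ I`.
  rw [← decompose_lie_of_mem h𝒮 (hιgr τ _ (SetLike.coe_mem _)), hs _ (hI.1 x hx τ),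
    decompose_zero, DirectSum.zero_apply, ZeroMemClass.coe_zero]

theorem hasEssentialDenominator_prod_swap {ι : L →ₗ⁅Φ⁆ S} {ι' : L →ₗ⁅Φ⁆ S'} {s : S} {s' : S'} :
    HasEssentialDenominator ℒ (ι'.prod ι) (s', s) ↔
      HasEssentialDenominator ℒ (ι.prod ι') (s, s') := by
  simp only [HasEssentialDenominator, Set.mem_range, LieHom.prod_apply,
    LieAlgebra.Prod.bracket_apply, Prod.mk.injEq, and_comm]

theorem eq_of_hasEssentialDenominator_prod [Group G] [Decomposition 𝒮'] {ι : L →ₗ⁅Φ⁆ S}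
    (hι : Function.Injective ι) (h𝒮' : IsLieGrading 𝒮') {ι' : L →ₗ⁅Φ⁆ S'}
    (hι'gr : ∀ σ : G, ∀ x ∈ ℒ σ, ι' x ∈ 𝒮' σ) (hS' : EssentialIdealsActFaithfully ℒ 𝒮' ι')
    {s : S} {s'₁ s'₂ : S'} (h₁ : HasEssentialDenominator ℒ (ι.prod ι') (s, s'₁))
    (h₂ : HasEssentialDenominator ℒ (ι.prod ι') (s, s'₂)) : s'₁ = s'₂ := by
  obtain ⟨I, hI, h⟩ := h₁.sub h₂
  rw [← sub_eq_zero]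
  refine hS'.eq_zero h𝒮' hι'gr hI fun x hx => ?_
  obtain ⟨a, ha⟩ := h x hx
  simp only [LieHom.prod_apply, Prod.mk_sub_mk, sub_self, LieAlgebra.Prod.bracket_apply, lie_zero,
    Prod.mk.injEq] at ha
  rw [← ha.2, hι (ha.1.trans (map_zero ι).symm), map_zero]

theorem exists_isDerivationOn_map_eq_lie {ι : L →ₗ⁅Φ⁆ S} (hι : Function.Injective ι) {s : S}
    {I : LieIdeal Φ L} (hIs : ∀ x ∈ I, ⁅ι x, s⁆ ∈ Set.range ι) :
    ∃ δ : ↥I →ₗ[Φ] L, IsDerivationOn I δ ∧ ∀ x : ↥I, ι (δ x) = ⁅s, ι (x : L)⁆ := by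
  let ad_s : ↥I →ₗ[Φ] LinearMap.range ι.toLinearMap :=
    LinearMap.codRestrict _ (LieAlgebra.ad Φ S s ∘ₗ ι.toLinearMap ∘ₗ (I : Submodule Φ L).subtype)
      fun x => by
        obtain ⟨a, ha⟩ := hIs x x.2
        exact ⟨-a, by rw [map_neg]; exact (congrArg Neg.neg ha).trans (lie_skew s _)⟩
  let δ := (LinearEquiv.ofInjective ι.toLinearMap hι).symm.toLinearMap ∘ₗ ad_s
  have hδ : ∀ x : ↥I, ι (δ x) = ⁅s, ι (x : L)⁆ := fun x =>
    LinearEquiv.ofInjective_symm_apply (f := ι.toLinearMap) (h := hι) (ad_s x)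
  refine ⟨δ, fun x y => hι ?_, hδ⟩
  rw [hδ, map_add, LieHom.map_lie, LieHom.map_lie, LieHom.map_lie, hδ, hδ]
  exact leibniz_lie s _ _

theorem exists_hasEssentialDenominator_prod_of_mem [CommGroup G] [Decomposition 𝒮]
    (h𝒮 : IsLieGrading 𝒮)
    {ι : L →ₗ⁅Φ⁆ S} (hι : Function.Injective ι) (hιgr : ∀ σ : G, ∀ x ∈ ℒ σ, ι x ∈ 𝒮 σ)
    (hS : HomogeneousHaveEssentialDenominators ℒ 𝒮 ι) {ι' : L →ₗ⁅Φ⁆ S'}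
    (hS' : GradedDerivationsAreInner ℒ 𝒮' ι') {σ : G} {s : S} (hs : s ∈ 𝒮 σ) :
    ∃ s' ∈ 𝒮' σ, HasEssentialDenominator ℒ (ι.prod ι') (s, s') := by
  obtain ⟨I, hI, hIs⟩ := hS σ s hs
  obtain ⟨δ, hδ, hδι⟩ := exists_isDerivationOn_map_eq_lie hι hIs
  have hδσ : IsGradedOfDegree ℒ I δ σ := fun τ x hx =>
    mem_of_map_mem_of_graded hι hιgr (by rw [hδι, mul_comm]; exact h𝒮 _ _ _ _ hs (hιgr τ x hx))
  obtain ⟨s', hs', hs'δ⟩ := hS' I hI σ δ hδ hδσ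
  refine ⟨s', hs', I, hI, fun x hx => ⟨-δ ⟨x, hx⟩, ?_⟩⟩
  simp only [LieHom.prod_apply, map_neg, hδι, hs'δ, LieAlgebra.Prod.bracket_apply, Prod.neg_mk,
    lie_skew]

theorem existsUnique_hasEssentialDenominator_prod [CommGroup G] [Decomposition 𝒮]
    [Decomposition 𝒮'] {ι : L →ₗ⁅Φ⁆ S} {ι' : L →ₗ⁅Φ⁆ S'} (h𝒮 : IsLieGrading 𝒮)
    (hι : Function.Injective ι) (hιgr : ∀ σ : G, ∀ x ∈ ℒ σ, ι x ∈ 𝒮 σ)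
    (hS : HomogeneousHaveEssentialDenominators ℒ 𝒮 ι) (h𝒮' : IsLieGrading 𝒮')
    (hι'gr : ∀ σ : G, ∀ x ∈ ℒ σ, ι' x ∈ 𝒮' σ) (hS'faithful : EssentialIdealsActFaithfully ℒ 𝒮' ι')
    (hS'inner : GradedDerivationsAreInner ℒ 𝒮' ι') (s : S) :
    ∃! s' : S', HasEssentialDenominator ℒ (ι.prod ι') (s, s') := by
  have hex : ∃ s' : S', HasEssentialDenominator ℒ (ι.prod ι') (s, s') := by
    induction s using Decomposition.inductionOn 𝒮 with
    | zero => exact ⟨0, by simpa using hasEssentialDenominator_map (ℒ := ℒ) (ι.prod ι') 0⟩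
    | homogeneous s =>
      obtain ⟨s', -, h⟩ := exists_hasEssentialDenominator_prod_of_mem h𝒮 hι hιgr hS hS'inner s.2
      exact ⟨s', h⟩
    | add s t hs ht =>
      obtain ⟨s', hs⟩ := hs
      obtain ⟨t', ht⟩ := ht
      exact ⟨s' + t', hs.add ht⟩
  obtain ⟨s', hs'⟩ := hex
  exact ⟨s', hs', fun t' ht' =>
    eq_of_hasEssentialDenominator_prod hι h𝒮' hι'gr hS'faithful ht' hs'⟩

end AlgebraOfQuotients

namespace LieSubalgebra

variable {Φ : Type*} [CommRing Φ]
variable {S : Type*} [LieRing S] [LieAlgebra Φ S] {S' : Type*} [LieRing S'] [LieAlgebra Φ S']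
variable (Γ : LieSubalgebra Φ (S × S'))

theorem bijective_fst_comp_incl (h : ∀ s, ∃! s', (s, s') ∈ Γ) :
    Function.Bijective ((LieHom.fst Φ S S').comp Γ.incl) := by
  refine ⟨fun p q hpq => ?_, fun s => ?_⟩
  · have hfst : p.1.1 = q.1.1 := hpq
    have hp : (q.1.1, p.1.2) ∈ Γ := hfst ▸ p.2
    exact Subtype.ext (Prod.ext hfst ((h _).unique hp q.2))
  · obtain ⟨s', hs', -⟩ := h s
    exact ⟨⟨(s, s'), hs'⟩, rfl⟩

theorem bijective_snd_comp_incl (h : ∀ s', ∃! s, (s, s') ∈ Γ) :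
    Function.Bijective ((LieHom.snd Φ S S').comp Γ.incl) := by
  refine ⟨fun p q hpq => ?_, fun s' => ?_⟩
  · have hsnd : p.1.2 = q.1.2 := hpq
    have hp : (p.1.1, q.1.2) ∈ Γ := hsnd ▸ p.2
    exact Subtype.ext (Prod.ext ((h _).unique hp q.2) hsnd)
  · obtain ⟨s, hs, -⟩ := h s'
    exact ⟨⟨(s, s'), hs⟩, rfl⟩

noncomputable def graphEquiv (h₁ : ∀ s, ∃! s', (s, s') ∈ Γ) (h₂ : ∀ s', ∃! s, (s, s') ∈ Γ) :
    S ≃ₗ⁅Φ⁆ S' :=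
  (LieEquiv.ofBijective _ (Γ.bijective_fst_comp_incl h₁)).symm.trans
    (LieEquiv.ofBijective _ (Γ.bijective_snd_comp_incl h₂))

variable {Γ}

theorem graphEquiv_apply_eq_iff {h₁ : ∀ s, ∃! s', (s, s') ∈ Γ} {h₂ : ∀ s', ∃! s, (s, s') ∈ Γ}
    {s : S} {s' : S'} : Γ.graphEquiv h₁ h₂ s = s' ↔ (s, s') ∈ Γ := by
  set p := (LieEquiv.ofBijective _ (Γ.bijective_fst_comp_incl h₁)).symm s
  have hp : (p : S × S') = (s, Γ.graphEquiv h₁ h₂ s) :=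
    Prod.ext ((LieEquiv.ofBijective _ (Γ.bijective_fst_comp_incl h₁)).apply_symm_apply s) rfl
  have hmem : (s, Γ.graphEquiv h₁ h₂ s) ∈ Γ := hp ▸ p.2
  exact ⟨fun h => h ▸ hmem, fun h => (h₁ s).unique hmem h⟩

end LieSubalgebra

/-- Let `L` be a graded semiprime `G`-graded Lie algebra and
let `S`, `S'` be `G`-graded Lie algebras each containing `L` as a graded
subalgebra (via graded injective Lie algebra homomorphisms `ι`, `ι'`) and each
satisfying:
(1) every homogeneous `s_σ` is carried into `L` by some graded essential ideal
of `L`;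
(2) a homogeneous `s_σ` annihilated by a graded essential ideal of `L` is zero;
(3) every graded derivation of degree `σ` from a graded essential ideal of `L`
into `L` is implemented by a homogeneous element of degree `σ`.
Then there is a graded Lie algebra isomorphism `S ≃ S'` which is the identity
on `L`. -/
theorem maximal_graded_algebra_of_quotients_unique
    {Φ : Type*} [CommRing Φ] {G : Type*} [CommGroup G] [DecidableEq G]
    {L : Type*} [LieRing L] [LieAlgebra Φ L]
    {S : Type*} [LieRing S] [LieAlgebra Φ S]
    {S' : Type*} [LieRing S'] [LieAlgebra Φ S']
    (ℒ : G → Submodule Φ L) [DirectSum.Decomposition ℒ]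
    (hℒ : ∀ (σ τ : G) (x y : L), x ∈ ℒ σ → y ∈ ℒ τ → ⁅x, y⁆ ∈ ℒ (σ * τ))
    (𝒮 : G → Submodule Φ S) [DirectSum.Decomposition 𝒮]
    (h𝒮 : ∀ (σ τ : G) (x y : S), x ∈ 𝒮 σ → y ∈ 𝒮 τ → ⁅x, y⁆ ∈ 𝒮 (σ * τ))
    (𝒮' : G → Submodule Φ S') [DirectSum.Decomposition 𝒮']
    (h𝒮' : ∀ (σ τ : G) (x y : S'), x ∈ 𝒮' σ → y ∈ 𝒮' τ → ⁅x, y⁆ ∈ 𝒮' (σ * τ))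
    -- `L` is graded semiprime:
    (hsemiprime : ∀ J : LieIdeal Φ L, IsGradedLieIdeal ℒ J → J ≠ ⊥ →
      ⁅J, J⁆ ≠ (⊥ : LieIdeal Φ L))
    -- `L` is a graded subalgebra of `S` and of `S'`:
    (ι : L →ₗ⁅Φ⁆ S) (hι : Function.Injective ι)
    (hιgr : ∀ σ : G, ∀ x ∈ ℒ σ, ι x ∈ 𝒮 σ)
    (ι' : L →ₗ⁅Φ⁆ S') (hι' : Function.Injective ι')
    (hι'gr : ∀ σ : G, ∀ x ∈ ℒ σ, ι' x ∈ 𝒮' σ)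
    -- property (1) for `S` and `S'`:
    (hS1 : ∀ (σ : G) (s : S), s ∈ 𝒮 σ →
      ∃ I : LieIdeal Φ L, IsGradedEssentialLieIdeal ℒ I ∧
        ∀ x ∈ I, ⁅ι x, s⁆ ∈ Set.range ι)
    (hS'1 : ∀ (σ : G) (s : S'), s ∈ 𝒮' σ →
      ∃ I : LieIdeal Φ L, IsGradedEssentialLieIdeal ℒ I ∧
        ∀ x ∈ I, ⁅ι' x, s⁆ ∈ Set.range ι')
    -- property (2) for `S` and `S'`:
    (hS2 : ∀ (σ : G) (s : S), s ∈ 𝒮 σ →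
      ∀ I : LieIdeal Φ L, IsGradedEssentialLieIdeal ℒ I →
        (∀ x ∈ I, ⁅ι x, s⁆ = 0) → s = 0)
    (hS'2 : ∀ (σ : G) (s : S'), s ∈ 𝒮' σ →
      ∀ I : LieIdeal Φ L, IsGradedEssentialLieIdeal ℒ I →
        (∀ x ∈ I, ⁅ι' x, s⁆ = 0) → s = 0)
    -- property (3) for `S` and `S'`:
    (hS3 : ∀ I : LieIdeal Φ L, IsGradedEssentialLieIdeal ℒ I →
      ∀ (σ : G) (δ : ↥I →ₗ[Φ] L), IsDerivationOn I δ → IsGradedOfDegree ℒ I δ σ →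
        ∃ s : S, s ∈ 𝒮 σ ∧ ∀ x : ↥I, ι (δ x) = ⁅s, ι (x : L)⁆)
    (hS'3 : ∀ I : LieIdeal Φ L, IsGradedEssentialLieIdeal ℒ I →
      ∀ (σ : G) (δ : ↥I →ₗ[Φ] L), IsDerivationOn I δ → IsGradedOfDegree ℒ I δ σ →
        ∃ s : S', s ∈ 𝒮' σ ∧ ∀ x : ↥I, ι' (δ x) = ⁅s, ι' (x : L)⁆) :
    ∃ φ : S ≃ₗ⁅Φ⁆ S',
      (∀ x : L, φ (ι x) = ι' x) ∧
      ∀ (σ : G) (s : S), s ∈ 𝒮 σ ↔ φ s ∈ 𝒮' σ := by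
  set Γ := denominatorSubalgebra hℒ hsemiprime (ι.prod ι')
  have hΓ : ∀ s, ∃! s', (s, s') ∈ Γ :=
    existsUnique_hasEssentialDenominator_prod h𝒮 hι hιgr hS1 h𝒮' hι'gr hS'2 hS'3
  have hΓ' : ∀ s', ∃! s, (s, s') ∈ Γ := fun s' =>
    (existsUnique_congr fun _ => hasEssentialDenominator_prod_swap).1
      (existsUnique_hasEssentialDenominator_prod h𝒮' hι' hι'gr hS'1 h𝒮 hιgr hS2 hS3 s')
  refine ⟨Γ.graphEquiv hΓ hΓ', fun x => LieSubalgebra.graphEquiv_apply_eq_iff.2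
    (hasEssentialDenominator_map _ x), fun σ s => ⟨fun hs => ?_, fun hs => ?_⟩⟩
  · obtain ⟨s', hs', h⟩ := exists_hasEssentialDenominator_prod_of_mem h𝒮 hι hιgr hS1 hS'3 hs
    rwa [LieSubalgebra.graphEquiv_apply_eq_iff.2 h]
  · obtain ⟨t, ht, h⟩ := exists_hasEssentialDenominator_prod_of_mem h𝒮' hι' hι'gr hS'1 hS3 hs
    rwa [← (hΓ' _).unique (hasEssentialDenominator_prod_swap.1 h)
      (LieSubalgebra.graphEquiv_apply_eq_iff.1 rfl)]
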